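/- Suppose Y = H X + U and Z = G X + V, where H, G are deterministic matrices and X, U, V are mutually independent with E[U] = 0. Then E[Y|Z] = H E[X|Z] almost surely, and consequently the PLMMSE estimator takes the form X̂ = A Y + (I − A H) E[X|Z] with A = (Γ_{XX} − Γ_{E[X|Z],E[X|Z]}) Hᵀ (H (Γ_{XX} − Γ_{E[X|Z],E[X|Z]}) Hᵀ + Γ_{UU})†. -/

import Mathlib

open MeasureTheory Matrix ProbabilityTheory

/-! The noise `U` is independent of `Z = G X + V`, so `E[U|Z] = E[U] = 0` and hence
`E[Y|Z] = H E[X|Z]`; the innovation is `Ỹ = H R + U` with `R = X - E[X|Z]`. Since `R` is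
orthogonal to every square-integrable `Z`-measurable variable, `Γ_{XR} = Γ_{RR} = Γ_{XX} - Γ_{X̂X̂}`
with `X̂ = E[X|Z]`, while `U` is uncorrelated with `X` and with `X̂`. This gives
`Γ_{XỸ} = (Γ_{XX} - Γ_{X̂X̂}) Hᵀ` and `Γ_{ỸỸ} = H (Γ_{XX} - Γ_{X̂X̂}) Hᵀ + Γ_{UU}`, so the two
pseudo-inverses coincide by uniqueness of the Moore–Penrose inverse, and the formula follows by
expanding `Ỹ = Y - H X̂`. -/

noncomputable def condExpVec {Ω : Type} {mΩ : MeasurableSpace Ω} (μ : Measure Ω)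
    (m : MeasurableSpace Ω) {N : ℕ} (Y : Ω → Fin N → ℝ) : Ω → Fin N → ℝ :=
  fun ω i => (μ[(fun ω' => Y ω' i)|m]) ω

noncomputable def meanVec {Ω : Type} {mΩ : MeasurableSpace Ω} (μ : Measure Ω)
    {N : ℕ} (Y : Ω → Fin N → ℝ) : Fin N → ℝ := fun i => ∫ ω, Y ω i ∂μ

noncomputable def crossCov {Ω : Type} {mΩ : MeasurableSpace Ω} (μ : Measure Ω)
    {M N : ℕ} (X : Ω → Fin M → ℝ) (Y : Ω → Fin N → ℝ) : Matrix (Fin M) (Fin N) ℝ :=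
  Matrix.of fun i j => ∫ ω, (X ω i - meanVec μ X i) * (Y ω j - meanVec μ Y j) ∂μ

/-- The residual `Y - E[Y|m]` (the innovation `Ỹ`). -/
noncomputable def resid {Ω : Type} {mΩ : MeasurableSpace Ω} (μ : Measure Ω)
    (m : MeasurableSpace Ω) {N : ℕ} (Y : Ω → Fin N → ℝ) : Ω → Fin N → ℝ :=
  fun ω => Y ω - condExpVec (mΩ := mΩ) μ m Y ω

def IsMoorePenrose {m n : ℕ} (A : Matrix (Fin m) (Fin n) ℝ) (P : Matrix (Fin n) (Fin m) ℝ) : Prop :=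
  A * P * A = A ∧ P * A * P = P ∧ (A * P)ᵀ = A * P ∧ (P * A)ᵀ = P * A

/-- The PLMMSE estimator `X̂ = Γ_{XỸ} Γ_{ỸỸ}† Ỹ + E[X|Z]`, where `P` is a matrix
playing the role of the Moore–Penrose pseudo-inverse `Γ_{ỸỸ}†`. -/
noncomputable def plmmse {Ω : Type} {mΩ : MeasurableSpace Ω} (μ : Measure Ω)
    {M N Q : ℕ} (X : Ω → Fin M → ℝ) (Y : Ω → Fin N → ℝ) (Z : Ω → Fin Q → ℝ)
    (P : Matrix (Fin N) (Fin N) ℝ) : Ω → Fin M → ℝ :=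
  fun ω =>
    (crossCov μ X (resid μ (MeasurableSpace.comap Z inferInstance) Y) * P).mulVec
      (resid μ (MeasurableSpace.comap Z inferInstance) Y ω) +
    condExpVec μ (MeasurableSpace.comap Z inferInstance) X ω

theorem IsMoorePenrose.unique {m n : ℕ} {A : Matrix (Fin m) (Fin n) ℝ}
    {P P' : Matrix (Fin n) (Fin m) ℝ} (hP : IsMoorePenrose A P) (hP' : IsMoorePenrose A P') :
    P = P' := by
  obtain ⟨hAPA, hPAP, hAP, hPA⟩ := hP
  obtain ⟨hAP'A, hP'AP', hAP', hP'A⟩ := hP'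
  have hAP_eq : A * P = A * P' := calc
    A * P = (A * P' * A * P)ᵀ := by rw [hAP'A, hAP]
    _ = (A * P)ᵀ * (A * P')ᵀ := by simp only [Matrix.mul_assoc, Matrix.transpose_mul]
    _ = A * P' := by rw [hAP, hAP', ← Matrix.mul_assoc, hAPA]
  have hPA_eq : P * A = P' * A := calc
    P * A = (P * (A * P' * A))ᵀ := by rw [hAP'A, hPA]
    _ = (P' * A)ᵀ * (P * A)ᵀ := by simp only [Matrix.mul_assoc, Matrix.transpose_mul]
    _ = P' * A := by rw [hPA, hP'A, Matrix.mul_assoc, ← Matrix.mul_assoc A, hAPA]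
  calc P = P * A * P := hPAP.symm
    _ = P' * A * P' := by rw [hPA_eq, Matrix.mul_assoc, hAP_eq, ← Matrix.mul_assoc]
    _ = P' := hP'AP'

theorem ProbabilityTheory.IndepFun.indepFun_prodMk_leftComm {Ω α β γ : Type*}
    {mΩ : MeasurableSpace Ω} {μ : Measure Ω} [IsFiniteMeasure μ]
    [MeasurableSpace α] [MeasurableSpace β] [MeasurableSpace γ]
    {X : Ω → α} {U : Ω → β} {V : Ω → γ}
    (hX : Measurable X) (hU : Measurable U) (hV : Measurable V)
    (hX_UV : IndepFun X (fun ω => (U ω, V ω)) μ) (hUV : IndepFun U V μ) :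
    IndepFun U (fun ω => (X ω, V ω)) μ := by
  rw [indepFun_iff_map_prod_eq_prod_map_map hU.aemeasurable (hX.prodMk hV).aemeasurable,
    (indepFun_iff_map_prod_eq_prod_map_map hX.aemeasurable hV.aemeasurable).1
      (hX_UV.comp measurable_id measurable_snd)]
  refine Measure.ext_prod₃ fun {s t u} hs ht hu => ?_
  have hXUV := hX_UV.measure_inter_preimage_eq_mul t (s ×ˢ u) ht (hs.prod hu)
  have hUV' := hUV.measure_inter_preimage_eq_mul s u hs hu
  rw [Measure.map_apply (hU.prodMk (hX.prodMk hV)) (hs.prod (ht.prod hu)),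
    Measure.prod_prod, Measure.prod_prod, Measure.map_apply hU hs, Measure.map_apply hX ht,
    Measure.map_apply hV hu]
  calc μ ((fun ω => (U ω, X ω, V ω)) ⁻¹' s ×ˢ t ×ˢ u)
      = μ (X ⁻¹' t ∩ (fun ω => (U ω, V ω)) ⁻¹' s ×ˢ u) := by
        congr 1; ext ω; simp [and_left_comm]
    _ = μ (U ⁻¹' s) * (μ (X ⁻¹' t) * μ (V ⁻¹' u)) := by
        rw [hXUV, Set.mk_preimage_prod, hUV']; ring

section CrossCovariance

variable {Ω : Type} {mΩ : MeasurableSpace Ω} {μ : Measure Ω} {K M N : ℕ}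

theorem ProbabilityTheory.covariance_congr_ae {f f' g g' : Ω → ℝ} (hf : f =ᵐ[μ] f')
    (hg : g =ᵐ[μ] g') : cov[f, g; μ] = cov[f', g'; μ] := by
  unfold covariance
  rw [integral_congr_ae hf, integral_congr_ae hg]
  exact integral_congr_ae (by filter_upwards [hf, hg] with ω hfω hgω; rw [hfω, hgω])

theorem crossCov_apply (X : Ω → Fin M → ℝ) (Y : Ω → Fin N → ℝ) (i : Fin M) (j : Fin N) :
    crossCov μ X Y i j = cov[fun ω => X ω i, fun ω => Y ω j; μ] :=
  rfl

theorem crossCov_transpose (X : Ω → Fin M → ℝ) (Y : Ω → Fin N → ℝ) :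
    (crossCov μ X Y)ᵀ = crossCov μ Y X := by
  ext i j
  exact covariance_comm _ _

theorem crossCov_congr_ae {X X' : Ω → Fin M → ℝ} {Y Y' : Ω → Fin N → ℝ}
    (hX : X =ᵐ[μ] X') (hY : Y =ᵐ[μ] Y') : crossCov μ X Y = crossCov μ X' Y' := by
  ext i j
  exact covariance_congr_ae (hX.mono fun _ h => congrFun h i) (hY.mono fun _ h => congrFun h j)

theorem crossCov_const_right (X : Ω → Fin M → ℝ) (c : Fin N → ℝ) [IsProbabilityMeasure μ] :
    crossCov μ X (fun _ => c) = 0 := by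
  ext i j
  exact covariance_const_right (c j)

theorem ProbabilityTheory.IndepFun.crossCov_eq_zero {X : Ω → Fin M → ℝ} {Y : Ω → Fin N → ℝ}
    (h : IndepFun X Y μ) (hX : MemLp X 2 μ) (hY : MemLp Y 2 μ) : crossCov μ X Y = 0 := by
  ext i j
  exact (h.comp (measurable_pi_apply i) (measurable_pi_apply j)).covariance_eq_zero
    (hX.eval i) (hY.eval j)

variable [IsFiniteMeasure μ]

theorem crossCov_add_left {X X' : Ω → Fin M → ℝ} {Y : Ω → Fin N → ℝ}
    (hX : MemLp X 2 μ) (hX' : MemLp X' 2 μ) (hY : MemLp Y 2 μ) :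
    crossCov μ (fun ω => X ω + X' ω) Y = crossCov μ X Y + crossCov μ X' Y := by
  ext i j
  exact covariance_add_left (hX.eval i) (hX'.eval i) (hY.eval j)

theorem crossCov_sub_left {X X' : Ω → Fin M → ℝ} {Y : Ω → Fin N → ℝ}
    (hX : MemLp X 2 μ) (hX' : MemLp X' 2 μ) (hY : MemLp Y 2 μ) :
    crossCov μ (fun ω => X ω - X' ω) Y = crossCov μ X Y - crossCov μ X' Y := by
  ext i j
  exact covariance_sub_left (hX.eval i) (hX'.eval i) (hY.eval j)

theorem crossCov_add_right {X : Ω → Fin M → ℝ} {Y Y' : Ω → Fin N → ℝ}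
    (hX : MemLp X 2 μ) (hY : MemLp Y 2 μ) (hY' : MemLp Y' 2 μ) :
    crossCov μ X (fun ω => Y ω + Y' ω) = crossCov μ X Y + crossCov μ X Y' := by
  rw [← crossCov_transpose, crossCov_add_left hY hY' hX, Matrix.transpose_add,
    crossCov_transpose, crossCov_transpose]

theorem crossCov_sub_right {X : Ω → Fin M → ℝ} {Y Y' : Ω → Fin N → ℝ}
    (hX : MemLp X 2 μ) (hY : MemLp Y 2 μ) (hY' : MemLp Y' 2 μ) :
    crossCov μ X (fun ω => Y ω - Y' ω) = crossCov μ X Y - crossCov μ X Y' := by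
  rw [← crossCov_transpose, crossCov_sub_left hY hY' hX, Matrix.transpose_sub,
    crossCov_transpose, crossCov_transpose]

theorem crossCov_mulVec_left (A : Matrix (Fin K) (Fin M) ℝ) {X : Ω → Fin M → ℝ}
    {Y : Ω → Fin N → ℝ} (hX : MemLp X 2 μ) (hY : MemLp Y 2 μ) :
    crossCov μ (fun ω => A *ᵥ X ω) Y = A * crossCov μ X Y := by
  ext i j
  simp only [crossCov_apply, Matrix.mulVec, dotProduct, Matrix.mul_apply]
  rw [covariance_fun_sum_left (fun k => (hX.eval k).const_mul (A i k)) (hY.eval j)]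
  exact Finset.sum_congr rfl fun k _ => covariance_const_mul_left (A i k)

theorem crossCov_mulVec_right {X : Ω → Fin M → ℝ} (A : Matrix (Fin K) (Fin N) ℝ)
    {Y : Ω → Fin N → ℝ} (hX : MemLp X 2 μ) (hY : MemLp Y 2 μ) :
    crossCov μ X (fun ω => A *ᵥ Y ω) = crossCov μ X Y * Aᵀ := by
  rw [← crossCov_transpose, crossCov_mulVec_left A hY hX, Matrix.transpose_mul,
    crossCov_transpose]

end CrossCovariance

section ConditionalExpectation

variable {Ω : Type} {m mΩ : MeasurableSpace Ω} {μ : Measure Ω} {M N : ℕ}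

theorem memLp_condExpVec {X : Ω → Fin N → ℝ} (hX : MemLp X 2 μ) :
    MemLp (condExpVec μ m X) 2 μ :=
  MemLp.of_eval fun i => (hX.eval i).condExp one_le_two

theorem condExpVec_add {X Y : Ω → Fin N → ℝ} (hX : Integrable X μ) (hY : Integrable Y μ) :
    condExpVec μ m (fun ω => X ω + Y ω) =ᵐ[μ]
      fun ω => condExpVec μ m X ω + condExpVec μ m Y ω := by
  refine (ae_all_iff.2 fun i => condExp_add (hX.eval i) (hY.eval i) m).mono fun ω h => ?_
  funext i
  exact h i

theorem condExpVec_mulVec (A : Matrix (Fin N) (Fin M) ℝ) {X : Ω → Fin M → ℝ}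
    (hX : Integrable X μ) :
    condExpVec μ m (fun ω => A *ᵥ X ω) =ᵐ[μ] fun ω => A *ᵥ condExpVec μ m X ω := by
  have hrow : ∀ i, (fun ω => (A *ᵥ X ω) i) = ∑ k, A i k • fun ω => X ω k := by
    intro i; funext ω; simp [Matrix.mulVec, dotProduct, Finset.sum_apply]
  have hsum := fun i => condExp_finsetSum (s := Finset.univ)
    (fun k _ => (hX.eval k).smul (A i k)) m (μ := μ)
  have hsmul := fun i k => condExp_smul (μ := μ) (A i k) (fun ω => X ω k) m
  filter_upwards [ae_all_iff.2 hsum, ae_all_iff.2 fun i => ae_all_iff.2 (hsmul i)]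
    with ω hsumω hsmulω
  funext i
  change (μ[fun ω => (A *ᵥ X ω) i|m]) ω = ∑ k, A i k * (μ[fun ω => X ω k|m]) ω
  rw [hrow, hsumω i, Finset.sum_apply]
  exact Finset.sum_congr rfl fun k _ => hsmulω i k

theorem condExpVec_ae_eq_meanVec_of_indepFun {Q : ℕ} {U : Ω → Fin N → ℝ} {Z : Ω → Fin Q → ℝ}
    [IsProbabilityMeasure μ] (hU : Measurable U) (hZ : Measurable Z) (hUZ : IndepFun U Z μ) :
    condExpVec μ (MeasurableSpace.comap Z inferInstance) U =ᵐ[μ] fun _ => meanVec μ U := by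
  have hUi : ∀ i, StronglyMeasurable[MeasurableSpace.comap U inferInstance] fun ω => U ω i :=
    fun i => ((measurable_pi_apply i).comp (comap_measurable U)).stronglyMeasurable
  refine (ae_all_iff.2 fun i => condExp_indep_eq hU.comap_le hZ.comap_le (hUi i)
    ((IndepFun_iff_Indep U Z μ).1 hUZ)).mono fun ω h => ?_
  funext i
  exact h i

theorem covariance_condExp_left [IsProbabilityMeasure μ] (hm : m ≤ mΩ) {f g : Ω → ℝ}
    (hf : MemLp f 2 μ) (hg : MemLp g 2 μ) :
    cov[μ[f|m], g; μ] = cov[μ[f|m], μ[g|m]; μ] := by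
  have hf' : MemLp (μ[f|m]) 2 μ := hf.condExp one_le_two
  have hpull : μ[μ[f|m] * g|m] =ᵐ[μ] μ[f|m] * μ[g|m] :=
    condExp_mul_of_stronglyMeasurable_left stronglyMeasurable_condExp
      (hf'.integrable_mul hg) (hg.integrable one_le_two)
  rw [covariance_eq_sub hf' hg, covariance_eq_sub hf' (hg.condExp one_le_two),
    integral_condExp hm, ← integral_condExp hm (f := μ[f|m] * g), integral_congr_ae hpull,
    integral_condExp hm (f := g)]

theorem crossCov_condExpVec_left [IsProbabilityMeasure μ] (hm : m ≤ mΩ)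
    {X : Ω → Fin M → ℝ} {Y : Ω → Fin N → ℝ} (hX : MemLp X 2 μ) (hY : MemLp Y 2 μ) :
    crossCov μ (condExpVec μ m X) Y = crossCov μ (condExpVec μ m X) (condExpVec μ m Y) := by
  ext i j
  exact covariance_condExp_left hm (hX.eval i) (hY.eval j)

end ConditionalExpectation

section Innovation

variable {Ω : Type} {m mΩ : MeasurableSpace Ω} {μ : Measure Ω} [IsProbabilityMeasure μ]
  {M N : ℕ} {X : Ω → Fin M → ℝ}

omit [IsProbabilityMeasure μ] in
theorem resid_def (X : Ω → Fin M → ℝ) :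
    resid μ m X = fun ω => X ω - condExpVec μ m X ω :=
  rfl

omit [IsProbabilityMeasure μ] in
theorem memLp_resid (hX : MemLp X 2 μ) : MemLp (resid μ m X) 2 μ :=
  hX.sub (memLp_condExpVec hX)

theorem crossCov_condExpVec_resid (hm : m ≤ mΩ) (hX : MemLp X 2 μ) :
    crossCov μ (condExpVec μ m X) (resid μ m X) = 0 := by
  rw [resid_def, crossCov_sub_right (memLp_condExpVec hX) hX (memLp_condExpVec hX),
    crossCov_condExpVec_left hm hX hX, sub_self]

theorem crossCov_resid_right (hm : m ≤ mΩ) (hX : MemLp X 2 μ) :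
    crossCov μ X (resid μ m X) =
      crossCov μ X X - crossCov μ (condExpVec μ m X) (condExpVec μ m X) := by
  rw [resid_def, crossCov_sub_right hX hX (memLp_condExpVec hX),
    ← crossCov_transpose (condExpVec μ m X) X, crossCov_condExpVec_left hm hX hX,
    crossCov_transpose]

theorem crossCov_resid_resid (hm : m ≤ mΩ) (hX : MemLp X 2 μ) :
    crossCov μ (resid μ m X) (resid μ m X) =
      crossCov μ X X - crossCov μ (condExpVec μ m X) (condExpVec μ m X) := by
  nth_rw 1 [resid_def]
  rw [crossCov_sub_left hX (memLp_condExpVec hX) (memLp_resid hX), crossCov_resid_right hm hX,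
    crossCov_condExpVec_resid hm hX, sub_zero]

end Innovation

section LinearModel

variable {Ω : Type} {m mΩ : MeasurableSpace Ω} {μ : Measure Ω} [IsProbabilityMeasure μ]
  {M N : ℕ} {X : Ω → Fin M → ℝ} {U : Ω → Fin N → ℝ}

omit [IsProbabilityMeasure μ] in
theorem MeasureTheory.MemLp.mulVec {K : ℕ} (A : Matrix (Fin K) (Fin M) ℝ) (hX : MemLp X 2 μ) :
    MemLp (fun ω => A *ᵥ X ω) 2 μ :=
  MemLp.of_eval fun i => memLp_finsetSum Finset.univ fun k _ => (hX.eval k).const_mul (A i k)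

theorem crossCov_resid_left_eq_zero (hm : m ≤ mΩ) (hX : MemLp X 2 μ) (hU : MemLp U 2 μ)
    (hXU : IndepFun X U μ) {c : Fin N → ℝ} (hU_cond : condExpVec μ m U =ᵐ[μ] fun _ => c) :
    crossCov μ (resid μ m X) U = 0 := by
  rw [resid_def, crossCov_sub_left hX (memLp_condExpVec hX) hU, hXU.crossCov_eq_zero hX hU,
    crossCov_condExpVec_left hm hX hU, crossCov_congr_ae Filter.EventuallyEq.rfl hU_cond,
    crossCov_const_right, sub_zero]

variable (H : Matrix (Fin N) (Fin M) ℝ)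

theorem crossCov_mulVec_resid_add_right (hm : m ≤ mΩ) (hX : MemLp X 2 μ) (hU : MemLp U 2 μ)
    (hXU : IndepFun X U μ) :
    crossCov μ X (fun ω => H *ᵥ resid μ m X ω + U ω) =
      (crossCov μ X X - crossCov μ (condExpVec μ m X) (condExpVec μ m X)) * Hᵀ := by
  rw [crossCov_add_right hX ((memLp_resid hX).mulVec H) hU,
    crossCov_mulVec_right H hX (memLp_resid hX), crossCov_resid_right hm hX,
    hXU.crossCov_eq_zero hX hU, add_zero]

theorem crossCov_mulVec_resid_add_self (hm : m ≤ mΩ) (hX : MemLp X 2 μ) (hU : MemLp U 2 μ)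
    (hXU : IndepFun X U μ) {c : Fin N → ℝ} (hU_cond : condExpVec μ m U =ᵐ[μ] fun _ => c) :
    crossCov μ (fun ω => H *ᵥ resid μ m X ω + U ω) (fun ω => H *ᵥ resid μ m X ω + U ω) =
      H * (crossCov μ X X - crossCov μ (condExpVec μ m X) (condExpVec μ m X)) * Hᵀ +
        crossCov μ U U := by
  have hR := memLp_resid (m := m) hX
  have hHR := hR.mulVec H
  have hHR_add_U : MemLp (fun ω => H *ᵥ resid μ m X ω + U ω) 2 μ := hHR.add hU
  have hHR_U : crossCov μ (fun ω => H *ᵥ resid μ m X ω) U = 0 := by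
    rw [crossCov_mulVec_left H hR hU, crossCov_resid_left_eq_zero hm hX hU hXU hU_cond,
      Matrix.mul_zero]
  have hU_HR : crossCov μ U (fun ω => H *ᵥ resid μ m X ω) = 0 := by
    rw [← crossCov_transpose, hHR_U, Matrix.transpose_zero]
  rw [crossCov_add_left hHR hU hHR_add_U, crossCov_add_right hHR hHR hU,
    crossCov_add_right hU hHR hU, hHR_U, hU_HR, crossCov_mulVec_left H hR hHR,
    crossCov_mulVec_right H hR hR, crossCov_resid_resid hm hX, Matrix.mul_assoc]
  abel

end LinearModel

theorem stmt10_general {Ω : Type} [MeasurableSpace Ω] (μ : Measure Ω) [IsProbabilityMeasure μ]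
    {M N Q : ℕ} (X : Ω → Fin M → ℝ) (U : Ω → Fin N → ℝ) (V : Ω → Fin Q → ℝ)
    (H : Matrix (Fin N) (Fin M) ℝ) (G : Matrix (Fin Q) (Fin M) ℝ)
    (Y : Ω → Fin N → ℝ) (Z : Ω → Fin Q → ℝ)
    (hY : Y = fun ω => H.mulVec (X ω) + U ω) (hZ : Z = fun ω => G.mulVec (X ω) + V ω)
    (hXm : Measurable X) (hUm : Measurable U) (hVm : Measurable V)
    (hX2 : ∀ i, MemLp (fun ω => X ω i) 2 μ) (hU2 : ∀ i, MemLp (fun ω => U ω i) 2 μ)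
    -- mutual independence of `X`, `U`, `V`:
    (hind1 : IndepFun X (fun ω => (U ω, V ω)) μ) (hind2 : IndepFun U V μ)
    (hU0 : ∀ i, ∫ ω, U ω i ∂μ = 0)
    (P : Matrix (Fin N) (Fin N) ℝ)
    (hP : IsMoorePenrose
      (crossCov μ (resid μ (MeasurableSpace.comap Z inferInstance) Y)
        (resid μ (MeasurableSpace.comap Z inferInstance) Y)) P)
    (P2 : Matrix (Fin N) (Fin N) ℝ)
    (hP2 : IsMoorePenrose
      (H * (crossCov μ X X -
          crossCov μ (condExpVec μ (MeasurableSpace.comap Z inferInstance) X)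
            (condExpVec μ (MeasurableSpace.comap Z inferInstance) X)) * Hᵀ +
        crossCov μ U U) P2) :
    (condExpVec μ (MeasurableSpace.comap Z inferInstance) Y =ᵐ[μ] fun ω =>
      H.mulVec (condExpVec μ (MeasurableSpace.comap Z inferInstance) X ω)) ∧
    plmmse μ X Y Z P =ᵐ[μ] fun ω =>
      ((crossCov μ X X -
          crossCov μ (condExpVec μ (MeasurableSpace.comap Z inferInstance) X)
            (condExpVec μ (MeasurableSpace.comap Z inferInstance) X)) * Hᵀ * P2).mulVec (Y ω) +
      ((1 : Matrix (Fin M) (Fin M) ℝ) -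
          (crossCov μ X X -
            crossCov μ (condExpVec μ (MeasurableSpace.comap Z inferInstance) X)
              (condExpVec μ (MeasurableSpace.comap Z inferInstance) X)) * Hᵀ * P2 * H).mulVec
        (condExpVec μ (MeasurableSpace.comap Z inferInstance) X ω) := by
  have hX : MemLp X 2 μ := MemLp.of_eval hX2
  have hU : MemLp U 2 μ := MemLp.of_eval hU2
  have hXU : IndepFun X U μ := hind1.comp measurable_id measurable_fst
  have hZm : Measurable Z := hZ ▸ by fun_prop
  have hUZ : IndepFun U Z μ := hZ ▸ (hind1.indepFun_prodMk_leftComm hXm hUm hVm hind2).comp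
    measurable_id (by fun_prop : Measurable fun p : (Fin M → ℝ) × (Fin Q → ℝ) => G *ᵥ p.1 + p.2)
  have hU_cond := condExpVec_ae_eq_meanVec_of_indepFun hUm hZm hUZ
  rw [show meanVec μ U = 0 from funext hU0] at hU_cond
  have hY_cond : condExpVec μ (MeasurableSpace.comap Z inferInstance) Y =ᵐ[μ]
      fun ω => H *ᵥ condExpVec μ (MeasurableSpace.comap Z inferInstance) X ω := by
    filter_upwards [hY ▸ condExpVec_add ((hX.mulVec H).integrable one_le_two)
      (hU.integrable one_le_two), condExpVec_mulVec H (hX.integrable one_le_two), hU_cond]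
      with ω hsum hHX hU0ω
    rw [hsum, hHX, hU0ω, add_zero]
  have hY_resid : resid μ (MeasurableSpace.comap Z inferInstance) Y =ᵐ[μ]
      fun ω => H *ᵥ resid μ (MeasurableSpace.comap Z inferInstance) X ω + U ω := by
    filter_upwards [hY_cond] with ω hω
    simp only [resid_def]
    rw [hω, hY, Matrix.mulVec_sub, sub_add_eq_add_sub]
  rw [crossCov_congr_ae hY_resid hY_resid,
    crossCov_mulVec_resid_add_self H hZm.comap_le hX hU hXU hU_cond] at hP
  refine ⟨hY_cond, ?_⟩
  filter_upwards [hY_cond] with ω hω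
  rw [plmmse, crossCov_congr_ae Filter.EventuallyEq.rfl hY_resid, hP.unique hP2,
    crossCov_mulVec_resid_add_right H hZm.comap_le hX hU hXU, resid_def]
  simp only [hω, Matrix.mulVec_sub, Matrix.sub_mulVec, Matrix.one_mulVec, Matrix.mulVec_mulVec]
  abel

/-- for `Y = H X + U`, `Z = G X + V` with `X, U, V` mutually independent
and `E[U] = 0`, one has `E[Y|Z] = H E[X|Z]` a.s., and the PLMMSE estimator takes the
form `X̂ = A Y + (I - A H) E[X|Z]` with
`A = (Γ_{XX} - Γ_{E[X|Z],E[X|Z]}) Hᵀ (H (Γ_{XX} - Γ_{E[X|Z],E[X|Z]}) Hᵀ + Γ_{UU})†`. -/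
theorem stmt10 {Ω : Type} [MeasurableSpace Ω] (μ : Measure Ω) [IsProbabilityMeasure μ]
    {M N Q : ℕ} (X : Ω → Fin M → ℝ) (U : Ω → Fin N → ℝ) (V : Ω → Fin Q → ℝ)
    (H : Matrix (Fin N) (Fin M) ℝ) (G : Matrix (Fin Q) (Fin M) ℝ)
    (Y : Ω → Fin N → ℝ) (Z : Ω → Fin Q → ℝ)
    (hY : Y = fun ω => H.mulVec (X ω) + U ω) (hZ : Z = fun ω => G.mulVec (X ω) + V ω)
    (hXm : Measurable X) (hUm : Measurable U) (hVm : Measurable V)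
    (hX2 : ∀ i, MemLp (fun ω => X ω i) 2 μ) (hU2 : ∀ i, MemLp (fun ω => U ω i) 2 μ)
    (hV2 : ∀ i, MemLp (fun ω => V ω i) 2 μ)
    -- mutual independence of `X`, `U`, `V`:
    (hind1 : IndepFun X (fun ω => (U ω, V ω)) μ) (hind2 : IndepFun U V μ)
    (hU0 : ∀ i, ∫ ω, U ω i ∂μ = 0)
    (P : Matrix (Fin N) (Fin N) ℝ)
    (hP : IsMoorePenrose
      (crossCov μ (resid μ (MeasurableSpace.comap Z inferInstance) Y)
        (resid μ (MeasurableSpace.comap Z inferInstance) Y)) P)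
    (P2 : Matrix (Fin N) (Fin N) ℝ)
    (hP2 : IsMoorePenrose
      (H * (crossCov μ X X -
          crossCov μ (condExpVec μ (MeasurableSpace.comap Z inferInstance) X)
            (condExpVec μ (MeasurableSpace.comap Z inferInstance) X)) * Hᵀ +
        crossCov μ U U) P2) :
    (condExpVec μ (MeasurableSpace.comap Z inferInstance) Y =ᵐ[μ] fun ω =>
      H.mulVec (condExpVec μ (MeasurableSpace.comap Z inferInstance) X ω)) ∧
    plmmse μ X Y Z P =ᵐ[μ] fun ω =>
      ((crossCov μ X X -
          crossCov μ (condExpVec μ (MeasurableSpace.comap Z inferInstance) X)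
            (condExpVec μ (MeasurableSpace.comap Z inferInstance) X)) * Hᵀ * P2).mulVec (Y ω) +
      ((1 : Matrix (Fin M) (Fin M) ℝ) -
          (crossCov μ X X -
            crossCov μ (condExpVec μ (MeasurableSpace.comap Z inferInstance) X)
              (condExpVec μ (MeasurableSpace.comap Z inferInstance) X)) * Hᵀ * P2 * H).mulVec
        (condExpVec μ (MeasurableSpace.comap Z inferInstance) X ω) :=
  stmt10_general μ X U V H G Y Z hY hZ hXm hUm hVm hX2 hU2 hind1 hind2 hU0 P hP P2 hP2
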